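/- Consider a continuous-time Markov chain on state space ℤ≥0^2 with transition rates ρ((a,b),(a+1,b)) = k_1, ρ((a+1,b),(a,b)) = k_{−1}(a+1), ρ((a,b),(a,b+1)) = k_{−4}, ρ((a,b+1),(a,b)) = k_4(b+1), ρ((a+1,b),(a,b+1)) = k_2(a+1)a + k_3(a+1)b, ρ((a,b+1),(a+1,b)) = k_{−2}a(b+1) + k_{−3}(b+1)b, all rate constants positive. The Kolmogorov cycle condition on the triangle {(a,b),(a+1,b),(a,b+1)}, namely k_1 · (k_2(a+1)a + k_3(a+1)b) · k_4(b+1) = k_{−1}(a+1) · (k_{−2}a(b+1) + k_{−3}(b+1)b) · k_{−4}, holds for all integers a ≥ 1 and b ≥ 1 if and only if k_1 k_2 k_4 = k_{−1} k_{−2} k_{−4} and k_1 k_3 k_4 = k_{−1} k_{−3} k_{−4}. -/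
import Mathlib


/-- Kolmogorov cycle condition for Network 1 (`0 ⇌ A, 2A ⇌ A+B ⇌ 2B, B ⇌ 0`):
the triangle cycle condition holds for all integers `a, b ≥ 1` iff
`k₁k₂k₄ = k₋₁k₋₂k₋₄` and `k₁k₃k₄ = k₋₁k₋₃k₋₄`. -/
theorem network1_kcc (k1 km1 k2 km2 k3 km3 k4 km4 : ℝ)
    (h1 : 0 < k1) (h2 : 0 < km1) (h3 : 0 < k2) (h4 : 0 < km2)
    (h5 : 0 < k3) (h6 : 0 < km3) (h7 : 0 < k4) (h8 : 0 < km4) :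
    (∀ a b : ℤ, 1 ≤ a → 1 ≤ b →
      k1 * (k2 * ((a : ℝ) + 1) * a + k3 * ((a : ℝ) + 1) * b) * (k4 * ((b : ℝ) + 1)) =
        km1 * ((a : ℝ) + 1) * (km2 * (a : ℝ) * ((b : ℝ) + 1) + km3 * ((b : ℝ) + 1) * b) * km4) ↔
    (k1 * k2 * k4 = km1 * km2 * km4 ∧ k1 * k3 * k4 = km1 * km3 * km4) := by
  constructor
  · intro h
    have h11 := h 1 1 le_rfl le_rfl
    have h12 := h 1 2 le_rfl (by norm_num)
    push_cast at h11 h12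
    constructor <;> nlinarith [h11, h12]
  · rintro ⟨hA, hB⟩ a b ha hb
    linear_combination ((a:ℝ)+1)*((b:ℝ)+1)*((a:ℝ)*hA + (b:ℝ)*hB)
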